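/- Let p be a probability distribution on a finite set Ω, let x = F_2(p), and let S_l = {i : p_i < x/2}. If ∑_{i∈S_l} p_i ≥ ε/4, then F_3(p) − F_2(p)^2 ≥ ε F_2(p)^2 / 16. -/

import Mathlib

open Finset

theorem sum_mul_sub_sq_eq_sum_pow_three_sub_sq {ι : Type*} (s : Finset ι) (p : ι → ℝ)
    (hsum : ∑ i ∈ s, p i = 1) :
    ∑ i ∈ s, p i * (p i - ∑ j ∈ s, p j ^ 2) ^ 2 = ∑ i ∈ s, p i ^ 3 - (∑ i ∈ s, p i ^ 2) ^ 2 := by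
  set x := ∑ j ∈ s, p j ^ 2
  have hexpand : ∀ i, p i * (p i - x) ^ 2 = p i ^ 3 - 2 * x * p i ^ 2 + x ^ 2 * p i :=
    fun i => by ring
  simp only [hexpand, sum_add_distrib, sum_sub_distrib, ← mul_sum, hsum]
  ring

theorem sum_filter_lt_half_mul_le_sum_mul_sub_sq {ι : Type*} (s : Finset ι) (p : ι → ℝ)
    (hp : ∀ i ∈ s, 0 ≤ p i) (c : ℝ) :
    (∑ i ∈ s.filter fun i => p i < c / 2, p i) * (c / 2) ^ 2 ≤
      ∑ i ∈ s, p i * (p i - c) ^ 2 := by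
  rw [sum_mul]
  calc ∑ i ∈ s.filter fun i => p i < c / 2, p i * (c / 2) ^ 2
      ≤ ∑ i ∈ s.filter fun i => p i < c / 2, p i * (p i - c) ^ 2 := by
        refine sum_le_sum fun i hi => ?_
        obtain ⟨his, hlt⟩ := mem_filter.mp hi
        have hpi := hp i his
        have : (c / 2) ^ 2 ≤ (p i - c) ^ 2 := by nlinarith
        exact mul_le_mul_of_nonneg_left this hpi
    _ ≤ ∑ i ∈ s, p i * (p i - c) ^ 2 :=
        sum_le_sum_of_subset_of_nonneg (filter_subset _ _) fun i hi _ =>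
          mul_nonneg (hp i hi) (sq_nonneg _)

theorem stmt7_general {Ω : Type*} [Fintype Ω] (p : Ω → ℝ)
    (hp : ∀ i, 0 ≤ p i) (hsum : ∑ i, p i = 1)
    (x ε : ℝ) (hx : x = ∑ j, p j ^ 2)
    (hl : ε / 4 ≤ ∑ i ∈ Finset.univ.filter fun i => p i < x / 2, p i) :
    ε * (∑ i, p i ^ 2) ^ 2 / 16 ≤ ∑ i, p i ^ 3 - (∑ i, p i ^ 2) ^ 2 := by
  rw [← sum_mul_sub_sq_eq_sum_pow_three_sub_sq univ p hsum, ← hx]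
  calc ε * x ^ 2 / 16 = ε / 4 * (x / 2) ^ 2 := by ring
    _ ≤ (∑ i ∈ univ.filter fun i => p i < x / 2, p i) * (x / 2) ^ 2 :=
        mul_le_mul_of_nonneg_right hl (sq_nonneg _)
    _ ≤ ∑ i, p i * (p i - x) ^ 2 :=
        sum_filter_lt_half_mul_le_sum_mul_sub_sq univ p (fun i _ => hp i) x

/-- If `x = F₂(p)`, `S_l = {i : p_i < x/2}` and `∑_{i∈S_l} p_i ≥ ε/4`, then
`F₃(p) − F₂(p)² ≥ ε F₂(p)² / 16`. -/
theorem stmt7 {Ω : Type*} [Fintype Ω] (p : Ω → ℝ)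
    (hp : ∀ i, 0 ≤ p i) (hsum : ∑ i, p i = 1)
    (x ε : ℝ) (hε : 0 < ε) (hx : x = ∑ j, p j ^ 2)
    (hl : ε / 4 ≤ ∑ i ∈ Finset.univ.filter fun i => p i < x / 2, p i) :
    ε * (∑ i, p i ^ 2) ^ 2 / 16 ≤ ∑ i, p i ^ 3 - (∑ i, p i ^ 2) ^ 2 :=
  stmt7_general p hp hsum x ε hx hl
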